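/- The largest eigenvalue μ of the Laplacian matrix of the graph G strictly exceeds max over all pairs of adjacent vertices v ~ j of 2·(m_v² + m_j²)/(d_v + d_j). (This gives a counterexample to conjectured bound 36 of Brankov, Hansen and Stevanović.) -/

import Mathlib

/-- The edge list of the graph. -/
def edgeList : List (Fin 12 × Fin 12) :=
  [(0,3),(0,4),(0,8),(1,2),(1,3),(1,8),(1,10),(2,5),(2,7),(2,11),(3,7),(3,11),(4,6),(4,7),(5,8),(5,9),(6,9),(6,10),(7,10),(9,11),(10,11)]

/-- The graph under consideration. -/
def G : SimpleGraph (Fin 12) where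
  Adj v w := (v, w) ∈ edgeList ∨ (w, v) ∈ edgeList
  symm := ⟨fun _ _ h => h.symm⟩
  loopless := ⟨by intro v; fin_cases v <;> decide⟩

instance : DecidableRel G.Adj :=
  fun v w => inferInstanceAs (Decidable ((v, w) ∈ edgeList ∨ (w, v) ∈ edgeList))

/-- `d v` is the degree of the vertex `v`, as a real number. -/
noncomputable def d (v : Fin 12) : ℝ := G.degree v

/-- `m v` is the average of the degrees of the neighbours of `v`. -/
noncomputable def m (v : Fin 12) : ℝ :=
  (∑ u ∈ G.neighborFinset v, (G.degree u : ℝ)) / d v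

open Matrix

def xz : Fin 12 → ℤ := ![8,19,-19,-19,-8,8,8,19,-8,-8,-19,19]

lemma hQz : (∑ v, xz v * ((G.degree v : ℤ) * xz v - ∑ u ∈ G.neighborFinset v, xz u)) = 18906 := by
  decide

lemma hXXz : (∑ v, xz v * xz v) = 2550 := by decide

lemma hdm : ∀ v, (G.degree v = 3 ∧ (∑ u ∈ G.neighborFinset v, G.degree u) = 10)
    ∨ (G.degree v = 4 ∧ (∑ u ∈ G.neighborFinset v, G.degree u) = 15) := by decide

theorem laplacian_spectral_radius_exceeds_bound (μ : ℝ)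
    (hmem : μ ∈ spectrum ℝ (G.lapMatrix ℝ))
    (hmax : ∀ ν ∈ spectrum ℝ (G.lapMatrix ℝ), ν ≤ μ) :
    (Finset.univ.filter fun p : _ × _ => G.Adj p.1 p.2).sup' (by decide)
      (fun p => 2 * (m p.1 ^ 2 + m p.2 ^ 2) / (d p.1 + d p.2)) < μ := by
  have hL : (G.lapMatrix ℝ).PosSemidef := SimpleGraph.posSemidef_lapMatrix ℝ G
  have hB : (algebraMap ℝ (Matrix (Fin 12) (Fin 12) ℝ) μ - G.lapMatrix ℝ).IsHermitian := by
    rw [Matrix.algebraMap_eq_diagonal]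
    exact (Matrix.isHermitian_diagonal _).sub hL.1
  have heig : ∀ i, 0 ≤ hB.eigenvalues i := by
    intro i
    have h1 := hB.eigenvalues_mem_spectrum_real i
    rw [← spectrum.singleton_sub_eq] at h1
    obtain ⟨a, ha, b, hb, hab⟩ := Set.mem_sub.mp h1
    rw [Set.mem_singleton_iff] at ha
    subst ha
    have := hmax b hb
    linarith [hab ▸ sub_nonneg.mpr this]
  have hPSD := hB.posSemidef_iff_eigenvalues_nonneg.mpr heig
  set x : Fin 12 → ℝ := fun i => (xz i : ℝ) with hx
  have h0 := hPSD.dotProduct_mulVec_nonneg x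
  have hstar : star x = x := by
    funext i; simp [hx]
  rw [hstar, Matrix.sub_mulVec, dotProduct_sub,
    Algebra.algebraMap_eq_smul_one, Matrix.smul_mulVec, Matrix.one_mulVec,
    dotProduct_smul] at h0
  have hXX : x ⬝ᵥ x = 2550 := by
    have : x ⬝ᵥ x = ((∑ v, xz v * xz v : ℤ) : ℝ) := by
      simp [dotProduct, hx]
    rw [this, hXXz]; norm_num
  have hQ : x ⬝ᵥ (G.lapMatrix ℝ *ᵥ x) = 18906 := by
    have : x ⬝ᵥ (G.lapMatrix ℝ *ᵥ x)
        = ((∑ v, xz v * ((G.degree v : ℤ) * xz v - ∑ u ∈ G.neighborFinset v, xz u) : ℤ) : ℝ) := by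
      simp only [dotProduct, SimpleGraph.lapMatrix_mulVec_apply, hx]
      push_cast
      exact Finset.sum_congr rfl fun v _ => by ring
    rw [this, hQz]; norm_num
  rw [hXX, hQ, smul_eq_mul] at h0
  have hmu : (3151 : ℝ)/425 ≤ μ := by linarith
  -- the combinatorial bound
  have key : ∀ v : Fin 12, (d v = 3 ∧ m v = 10/3) ∨ (d v = 4 ∧ m v = 15/4) := by
    intro v
    have hm : m v = (((∑ u ∈ G.neighborFinset v, G.degree u : ℕ)) : ℝ) / d v := by
      rw [m]; congr 1; push_cast; rfl
    rcases hdm v with ⟨h1, h2⟩ | ⟨h1, h2⟩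
    · left
      have hd1 : d v = 3 := by rw [d, h1]; norm_num
      refine ⟨hd1, ?_⟩
      rw [hm, h2, hd1]; norm_num
    · right
      have hd1 : d v = 4 := by rw [d, h1]; norm_num
      refine ⟨hd1, ?_⟩
      rw [hm, h2, hd1]; norm_num
  rw [Finset.sup'_lt_iff]
  rintro ⟨v, w⟩ hp
  simp only [Finset.mem_filter] at hp
  rcases key v with ⟨h1, h2⟩ | ⟨h1, h2⟩ <;> rcases key w with ⟨h3, h4⟩ | ⟨h3, h4⟩ <;>
    simp only [h1, h2, h3, h4] <;> norm_num <;> linarith
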